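/- The constructions A ↦ h_A and h ↦ A_h are mutually inverse: for every discrete connection form A with D-type domain U one has A_{(h_A)}(q₀,q₁) = A(q₀,q₁) for all (q₀,q₁) ∈ U, and for every discrete horizontal lift h with domain U' one has h_{(A_h)}(q,r) = h(q,r) for all (q,r) ∈ U'. -/

import Mathlib

/-!
Freeness makes `κ q q₁` the only element carrying `q` to `q₁`, so it suffices to exhibit one.
For `A_{h_A} = A`, equivariance of `A` in its second slot gives
`A(q₀, q₁) = κ(q', q₁) · A(q₀, q')`, and this element visibly carries `A(q₀, q')⁻¹ • q'` to `q₁`.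
For `h_{A_h} = h`, any `p` over `π q'` equals `κ(p, q')⁻¹ • q'`; apply this to `p = h₂(q, π q')`.
-/

section OrbitDivision

variable {G P B : Type*} [Group G] [MulAction G P] {π : P → B} {κ : P → P → G}

theorem apply_smul_of_fibres_eq_orbits (hπ : ∀ q₀ q₁ : P, π q₀ = π q₁ ↔ ∃ g : G, g • q₀ = q₁)
    (g : G) (q : P) : π (g • q) = π q :=
  ((hπ q (g • q)).2 ⟨g, rfl⟩).symm

theorem kappa_eq_of_smul_eq (hfree : ∀ (g : G) (q : P), g • q = q → g = 1)
    (hκ : ∀ q₀ q₁ : P, π q₀ = π q₁ → κ q₀ q₁ • q₀ = q₁)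
    {q₀ q₁ : P} (hq : π q₀ = π q₁) {g : G} (hg : g • q₀ = q₁) : κ q₀ q₁ = g := by
  have hfix : (g⁻¹ * κ q₀ q₁) • q₀ = q₀ := by rw [mul_smul, hκ _ _ hq, ← hg, inv_smul_smul]
  exact (inv_mul_eq_one.mp (hfree _ _ hfix)).symm

theorem inv_kappa_smul_eq (hκ : ∀ q₀ q₁ : P, π q₀ = π q₁ → κ q₀ q₁ • q₀ = q₁)
    {p q : P} (hpq : π p = π q) : (κ p q)⁻¹ • q = p :=
  (eq_inv_smul_iff.mpr (hκ p q hpq)).symm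

theorem kappa_inv_smul_eq (hfree : ∀ (g : G) (q : P), g • q = q → g = 1)
    (hπ : ∀ q₀ q₁ : P, π q₀ = π q₁ ↔ ∃ g : G, g • q₀ = q₁)
    (hκ : ∀ q₀ q₁ : P, π q₀ = π q₁ → κ q₀ q₁ • q₀ = q₁)
    (a : G) {q q₁ : P} (hq : π q = π q₁) : κ (a⁻¹ • q) q₁ = κ q q₁ * a := by
  refine kappa_eq_of_smul_eq hfree hκ ?_ ?_
  · rw [apply_smul_of_fibres_eq_orbits hπ, hq]
  · rw [mul_smul, smul_inv_smul, hκ _ _ hq]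

end OrbitDivision

theorem discrete_connection_form_horizontal_lift_inverse_constructions_general
    {G : Type*} [Group G] {P : Type*} [MulAction G P] {B : Type*}
    (π : P → B)
    (hfree : ∀ (g : G) (q : P), g • q = q → g = 1)
    (hπ : ∀ q₀ q₁ : P, π q₀ = π q₁ ↔ ∃ g : G, g • q₀ = q₁)
    (κ : P → P → G)
    (hκ : ∀ q₀ q₁ : P, π q₀ = π q₁ → κ q₀ q₁ • q₀ = q₁)
    (U : Set (P × P))
    (U' : Set (P × B))
    -- a discrete connection form `A` with domain `U`
    (A : P → P → G)
    (hAequiv : ∀ q₀ q₁ : P, (q₀, q₁) ∈ U → ∀ g₀ g₁ : G,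
      A (g₀ • q₀) (g₁ • q₁) = g₁ * A q₀ q₁ * g₀⁻¹)
    -- a discrete horizontal lift `h` with domain `U'`
    (h : P → B → P × P)
    (hhsec : ∀ q r, (q, r) ∈ U' → (h q r).1 = q ∧ π ((h q r).2) = r) :
    -- `A_{h_A} = A` on `U` (for every admissible choice `q'` used to define `h_A`)
    (∀ q₀ q₁ : P, (q₀, q₁) ∈ U → ∀ q' : P, π q' = π q₁ → (q₀, q') ∈ U →
      κ ((A q₀ q')⁻¹ • q') q₁ = A q₀ q₁) ∧
    -- `h_{A_h} = h` on `U'` (for every admissible choice `q'` used to define `h_{A_h}`)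
    (∀ (q : P) (r : B), (q, r) ∈ U' → ∀ q' : P, π q' = r → (q, q') ∈ U →
      h q r = (q, (κ ((h q (π q')).2) q')⁻¹ • q')) := by
  constructor
  · intro q₀ q₁ _ q' hq' hU
    have hA : A q₀ q₁ = κ q' q₁ * A q₀ q' := by
      simpa [hκ _ _ hq'] using hAequiv q₀ q' hU 1 (κ q' q₁)
    rw [kappa_inv_smul_eq hfree hπ hκ _ hq', hA]
  · rintro q _ hr q' rfl _
    obtain ⟨hfst, hsnd⟩ := hhsec q _ hr
    exact Prod.ext hfst (inv_kappa_smul_eq hκ hsnd).symm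

/-- the constructions `A ↦ h_A` and `h ↦ A_h` are mutually inverse.
First part: for a discrete connection form `A` with D-type domain `U`,
`A_{h_A}(q₀,q₁) = κ(h_{A,2}(q₀,π q₁), q₁) = A(q₀,q₁)` on `U`, where
`h_{A,2}(q₀, π q₁) = A(q₀,q')⁻¹ • q'` for any choice of `q'` over `π q₁` with
`(q₀,q') ∈ U`.  Second part: for a discrete horizontal lift `h` with domain
`U' = (id × π)(U)`, `h_{A_h}(q,r) = (q, A_h(q,q')⁻¹ • q') = h(q,r)` on `U'`,
where `A_h(q,q') = κ(h₂(q, π q'), q')`. -/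
theorem discrete_connection_form_horizontal_lift_inverse_constructions
    {G : Type*} [Group G] {P : Type*} [MulAction G P] {B : Type*}
    (π : P → B)
    (hfree : ∀ (g : G) (q : P), g • q = q → g = 1)
    (hπ : ∀ q₀ q₁ : P, π q₀ = π q₁ ↔ ∃ g : G, g • q₀ = q₁)
    (κ : P → P → G)
    (hκ : ∀ q₀ q₁ : P, π q₀ = π q₁ → κ q₀ q₁ • q₀ = q₁)
    (U : Set (P × P))
    (hUinv : ∀ q₀ q₁ : P, (q₀, q₁) ∈ U → ∀ g₀ g₁ : G, (g₀ • q₀, g₁ • q₁) ∈ U)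
    (hUvert : ∀ q₀ q₁ : P, π q₀ = π q₁ → (q₀, q₁) ∈ U)
    (U' : Set (P × B))
    (hU' : U' = {x : P × B | ∃ q₁ : P, (x.1, q₁) ∈ U ∧ π q₁ = x.2})
    -- a discrete connection form `A` with domain `U`
    (A : P → P → G)
    (hAid : ∀ q : P, A q q = 1)
    (hAequiv : ∀ q₀ q₁ : P, (q₀, q₁) ∈ U → ∀ g₀ g₁ : G,
      A (g₀ • q₀) (g₁ • q₁) = g₁ * A q₀ q₁ * g₀⁻¹)
    -- a discrete horizontal lift `h` with domain `U'`
    (h : P → B → P × P)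
    (hhequiv : ∀ q r, (q, r) ∈ U' → ∀ g : G,
      h (g • q) r = (g • (h q r).1, g • (h q r).2))
    (hhsec : ∀ q r, (q, r) ∈ U' → (h q r).1 = q ∧ π ((h q r).2) = r)
    (hhnorm : ∀ q : P, h q (π q) = (q, q)) :
    -- `A_{h_A} = A` on `U` (for every admissible choice `q'` used to define `h_A`)
    (∀ q₀ q₁ : P, (q₀, q₁) ∈ U → ∀ q' : P, π q' = π q₁ → (q₀, q') ∈ U →
      κ ((A q₀ q')⁻¹ • q') q₁ = A q₀ q₁) ∧
    -- `h_{A_h} = h` on `U'` (for every admissible choice `q'` used to define `h_{A_h}`)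
    (∀ (q : P) (r : B), (q, r) ∈ U' → ∀ q' : P, π q' = r → (q, q') ∈ U →
      h q r = (q, (κ ((h q (π q')).2) q')⁻¹ • q')) :=
  discrete_connection_form_horizontal_lift_inverse_constructions_general π hfree hπ κ hκ U U' A
    hAequiv h hhsec
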